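/- Let B be an m×m real matrix with all entries nonnegative (m ≥ 1), and let G be the directed graph on vertices {1,…,m} with an edge from i to j if and only if B_{ij} > 0. Then G is acyclic if and only if tr(exp(B)) = m, where exp denotes the matrix exponential. -/

import Mathlib

/-!
Since `B` is entrywise nonnegative, `(B ^ k) i j > 0` exactly when the graph has a walk of
length `k` from `i` to `j`, so `tr (B ^ k) > 0` exactly when it has a closed walk of length `k`.
The series `tr (exp B) = ∑ₖ tr (B ^ k) / k!` has nonnegative terms and leading term `tr 1 = m`,
so it sums to `m` if and only if `tr (B ^ k) = 0` for every `k ≥ 1`.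
-/

open NormedSpace Nat

theorem HasSum.eq_apply_zero_iff_of_nonneg {α : Type*} [AddCommGroup α] [PartialOrder α]
    [IsOrderedAddMonoid α] [TopologicalSpace α] [IsTopologicalAddGroup α] [OrderClosedTopology α]
    {f : ℕ → α} {a : α} (hf : HasSum f a) (hf_nonneg : ∀ k, 0 ≤ f k) :
    a = f 0 ↔ ∀ k ≠ 0, f k = 0 := by
  have htail : HasSum (fun k => f (k + 1)) (a - f 0) := by
    simpa using (hasSum_nat_add_iff' 1).2 hf
  rw [← sub_eq_zero]
  constructor
  · intro ha k hk
    obtain ⟨k, rfl⟩ := Nat.exists_eq_succ_of_ne_zero hk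
    exact congrFun ((hasSum_zero_iff_of_nonneg fun k => hf_nonneg (k + 1)).1 (ha ▸ htail)) k
  · intro hf0
    exact htail.unique (by simp [hf0])

namespace Matrix

theorem trace_pow_nonneg {n R : Type*} [Fintype n] [DecidableEq n] [Semiring R] [PartialOrder R]
    [IsOrderedRing R] {A : Matrix n n R} (hA : ∀ i j, 0 ≤ A i j) (k : ℕ) :
    0 ≤ trace (A ^ k) :=
  Finset.sum_nonneg fun i _ => pow_apply_nonneg hA k i i

section Walks

variable {n R : Type*} [Fintype n] [DecidableEq n] [Semiring R] [LinearOrder R]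
  [IsStrictOrderedRing R] {A : Matrix n n R}

theorem pow_apply_pos_iff_exists_walk (hA : ∀ i j, 0 ≤ A i j) (k : ℕ) (i j : n) :
    0 < (A ^ k) i j ↔ ∃ v : ℕ → n, v 0 = i ∧ v k = j ∧ ∀ t < k, 0 < A (v t) (v (t + 1)) := by
  induction k generalizing j with
  | zero =>
    rw [pow_zero, one_apply]
    constructor
    · intro h
      refine ⟨fun _ => i, rfl, ?_, by omega⟩
      by_contra hij
      simp [hij] at h
    · rintro ⟨v, rfl, rfl, -⟩
      simp
  | succ k ih =>
    have hterm : ∀ l, 0 ≤ (A ^ k) i l * A l j :=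
      fun l => mul_nonneg (pow_apply_nonneg hA k i l) (hA l j)
    rw [pow_succ, mul_apply, Finset.sum_pos_iff_of_nonneg fun l _ => hterm l]
    constructor
    · rintro ⟨l, -, hl⟩
      have hAl : 0 < A l j := pos_of_mul_pos_right hl (pow_apply_nonneg hA k i l)
      obtain ⟨v, hv0, hvk, hv⟩ := (ih l).1 (pos_of_mul_pos_left hl (hA l j))
      refine ⟨Function.update v (k + 1) j, by simpa using hv0, by simp, fun t ht => ?_⟩
      rcases Nat.lt_succ_iff_lt_or_eq.1 ht with ht | rfl
      · rw [Function.update_of_ne (by omega), Function.update_of_ne (by omega)]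
        exact hv t ht
      · simpa [hvk] using hAl
    · rintro ⟨v, rfl, rfl, hv⟩
      exact ⟨v k, Finset.mem_univ _,
        mul_pos ((ih (v k)).2 ⟨v, rfl, rfl, fun t ht => hv t (by omega)⟩) (hv k k.lt_succ_self)⟩

theorem trace_pow_pos_iff_exists_closed_walk (hA : ∀ i j, 0 ≤ A i j) (k : ℕ) :
    0 < trace (A ^ k) ↔ ∃ v : ℕ → n, v k = v 0 ∧ ∀ t < k, 0 < A (v t) (v (t + 1)) := by
  simp only [trace, diag, Finset.sum_pos_iff_of_nonneg fun i _ => pow_apply_nonneg hA k i i,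
    Finset.mem_univ, true_and, pow_apply_pos_iff_exists_walk hA]
  constructor
  · rintro ⟨i, v, hv0, hvk, hv⟩
    exact ⟨v, hvk.trans hv0.symm, hv⟩
  · rintro ⟨v, hvk, hv⟩
    exact ⟨v 0, v, rfl, hvk, hv⟩

end Walks

theorem hasSum_trace_exp {n 𝕂 : Type*} [Fintype n] [DecidableEq n] [RCLike 𝕂]
    (A : Matrix n n 𝕂) : HasSum (fun k => (k !⁻¹ : 𝕂) * trace (A ^ k)) (trace (exp A)) := by
  open scoped Norms.Operator in
  have h := (exp_series_hasSum_exp' (𝕂 := 𝕂) A).map (traceAddMonoidHom n 𝕂)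
    (continuous_id.matrix_trace)
  simp only [Function.comp_def, traceAddMonoidHom_apply, trace_smul, smul_eq_mul] at h
  exact h

end Matrix

theorem acyclic_iff_trace_exp_eq_general (m : ℕ)
    (B : Matrix (Fin m) (Fin m) ℝ) (hB : ∀ i j, 0 ≤ B i j) :
    (¬ ∃ (k : ℕ) (v : ℕ → Fin m), 1 ≤ k ∧ v k = v 0 ∧
        ∀ t < k, 0 < B (v t) (v (t + 1))) ↔
      Matrix.trace (NormedSpace.exp B) = (m : ℝ) := by
  have hterm_zero_iff : ∀ k, (k !⁻¹ : ℝ) * Matrix.trace (B ^ k) = 0 ↔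
      ¬ ∃ v : ℕ → Fin m, v k = v 0 ∧ ∀ t < k, 0 < B (v t) (v (t + 1)) := by
    intro k
    rw [← Matrix.trace_pow_pos_iff_exists_closed_walk hB, not_lt,
      (Matrix.trace_pow_nonneg hB k).ge_iff_eq']
    simp [factorial_ne_zero]
  rw [show (m : ℝ) = (0 !⁻¹ : ℝ) * Matrix.trace (B ^ 0) by simp,
    (Matrix.hasSum_trace_exp B).eq_apply_zero_iff_of_nonneg
      fun k => mul_nonneg (by positivity) (Matrix.trace_pow_nonneg hB k)]
  simp only [hterm_zero_iff, not_exists, not_and, Nat.one_le_iff_ne_zero]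
  exact ⟨fun h k hk v => h k v hk, fun h k v hk => h k hk v⟩

/-- For a nonnegative `m × m` real matrix `B` (`m ≥ 1`) with associated directed graph
having an edge from `i` to `j` iff `B i j > 0`: the graph is acyclic iff
`tr (exp B) = m`, where `exp` is the matrix exponential. -/
theorem acyclic_iff_trace_exp_eq (m : ℕ) (hm : 1 ≤ m)
    (B : Matrix (Fin m) (Fin m) ℝ) (hB : ∀ i j, 0 ≤ B i j) :
    (¬ ∃ (k : ℕ) (v : ℕ → Fin m), 1 ≤ k ∧ v k = v 0 ∧
        ∀ t < k, 0 < B (v t) (v (t + 1))) ↔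
      Matrix.trace (NormedSpace.exp B) = (m : ℝ) :=
  acyclic_iff_trace_exp_eq_general m B hB
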